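/- Let G and H be finite connected nontrivial simple graphs, let u,x be vertices of G and v,y vertices of H. Then (u,v) and (x,y) are mutually maximally distant in the strong product G ⊠ H if and only if one of the following holds: (i) u,x are mutually maximally distant in G and v,y are mutually maximally distant in H; (ii) u,x are mutually maximally distant in G and v = y; (iii) v,y are mutually maximally distant in H and u = x; (iv) u,x are mutually maximally distant in G and d_G(u,x) > d_H(v,y); (v) v,y are mutually maximally distant in H and d_G(u,x) < d_H(v,y). -/

import Mathlib

open SimpleGraph Finset

variable {α β : Type*}

/-- The strong product of two simple graphs: distinct vertices `(a,b)` and `(c,d)` are adjacent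
iff (`a = c` or `a ~ c`) and (`b = d` or `b ~ d`). -/
def strongProd (G : SimpleGraph α) (H : SimpleGraph β) : SimpleGraph (α × β) where
  Adj x y := x ≠ y ∧ (x.1 = y.1 ∨ G.Adj x.1 y.1) ∧ (x.2 = y.2 ∨ H.Adj x.2 y.2)
  symm := ⟨by
    rintro x y ⟨h1, h2, h3⟩
    exact ⟨h1.symm, h2.imp Eq.symm (fun a => a.symm), h3.imp Eq.symm (fun a => a.symm)⟩⟩
  loopless := ⟨fun x h => h.1 rfl⟩

/-- The Cartesian sum (disjunctive product) of two simple graphs. -/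
def cartSum (G : SimpleGraph α) (H : SimpleGraph β) : SimpleGraph (α × β) where
  Adj x y := x ≠ y ∧ (G.Adj x.1 y.1 ∨ H.Adj x.2 y.2)
  symm := ⟨by
    rintro x y ⟨h1, h2⟩
    exact ⟨h1.symm, h2.imp (fun a => a.symm) (fun a => a.symm)⟩⟩
  loopless := ⟨fun x h => h.1 rfl⟩

/-- `u` is maximally distant from `v` in `G`. -/
def MaximallyDistantFrom (G : SimpleGraph α) (u v : α) : Prop :=
  ∀ w, G.Adj u w → G.dist v w ≤ G.dist u v

/-- `u` and `v` are mutually maximally distant in `G`. -/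
def MutuallyMaximallyDistant (G : SimpleGraph α) (u v : α) : Prop :=
  MaximallyDistantFrom G u v ∧ MaximallyDistantFrom G v u

/-- The strong resolving graph of `G`. -/
def strongResolvingGraph (G : SimpleGraph α) : SimpleGraph α where
  Adj u v := u ≠ v ∧ MutuallyMaximallyDistant G u v
  symm := ⟨by rintro u v ⟨h1, h2, h3⟩; exact ⟨h1.symm, h3, h2⟩⟩
  loopless := ⟨fun x h => h.1 rfl⟩

/-- A finset of vertices is independent if no two of its (distinct) members are adjacent. -/
def IsIndepFinset (G : SimpleGraph α) (s : Finset α) : Prop :=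
  ∀ u ∈ s, ∀ v ∈ s, u ≠ v → ¬ G.Adj u v

/-- The independence number `β(G)`. -/
noncomputable def indepNum (G : SimpleGraph α) [Fintype α] : ℕ :=
  sSup {n | ∃ s : Finset α, IsIndepFinset G s ∧ s.card = n}

/-- `w` strongly resolves `u` and `v` in `G`. -/
def StronglyResolves (G : SimpleGraph α) (w u v : α) : Prop :=
  G.dist w u = G.dist w v + G.dist v u ∨ G.dist w v = G.dist w u + G.dist u v

/-- A strong metric generator for `G`. -/
def IsStrongMetricGenerator (G : SimpleGraph α) (s : Finset α) : Prop :=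
  ∀ u v : α, u ≠ v → ∃ w ∈ s, StronglyResolves G w u v

/-- The strong metric dimension of `G`. -/
noncomputable def sdim (G : SimpleGraph α) [Fintype α] : ℕ :=
  sInf {n | ∃ s : Finset α, IsStrongMetricGenerator G s ∧ s.card = n}

/-!
Distances in `G ⊠ H` are the maximum of the coordinate distances. A neighbour of `(u, v)` moves
each coordinate by at most one, so it can only get farther from `(x, y)` through a coordinate that
realises this maximum. Hence `(u, v)` is maximally distant from `(x, y)` iff `u` is maximally
distant from `x` whenever `d_H(v, y) ≤ d_G(u, x)`, and `v` from `y` whenever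
`d_G(u, x) ≤ d_H(v, y)`. Cases (ii) and (iii) are the instances of (iv) and (v) where one distance
vanishes, because maximally distant vertices of a nontrivial connected graph are distinct.
-/

namespace SimpleGraph

variable {G : SimpleGraph α} {H : SimpleGraph β}

theorem strongProd_adj_of_adj_left {a a' : α} (h : G.Adj a a') (b : β) :
    (strongProd G H).Adj (a, b) (a', b) :=
  ⟨by simp [h.ne], Or.inr h, Or.inl rfl⟩

theorem strongProd_adj_of_adj_right (a : α) {b b' : β} (h : H.Adj b b') :
    (strongProd G H).Adj (a, b) (a, b') :=
  ⟨by simp [h.ne], Or.inl rfl, Or.inr h⟩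

theorem strongProd_adj_of_adj_of_adj {a a' : α} {b b' : β} (ha : G.Adj a a') (hb : H.Adj b b') :
    (strongProd G H).Adj (a, b) (a', b') :=
  ⟨by simp [ha.ne], Or.inr ha, Or.inr hb⟩

def strongProdLeftHom (b : β) : G →g strongProd G H where
  toFun a := (a, b)
  map_rel' h := strongProd_adj_of_adj_left h b

def strongProdRightHom (a : α) : H →g strongProd G H where
  toFun b := (a, b)
  map_rel' h := strongProd_adj_of_adj_right a h

theorem exists_strongProd_walk_length_eq_max {u x : α} {v y : β} (p : G.Walk u x)
    (q : H.Walk v y) :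
    ∃ r : (strongProd G H).Walk (u, v) (x, y), r.length = max p.length q.length := by
  induction p generalizing v with
  | nil =>
    exact ⟨q.map (strongProdRightHom _), (Walk.length_map _ _).trans (Nat.zero_max _).symm⟩
  | cons hp p ih =>
    cases q with
    | nil =>
      exact ⟨(Walk.cons hp p).map (strongProdLeftHom _),
        (Walk.length_map _ _).trans (Nat.max_zero _).symm⟩
    | cons hq q =>
      obtain ⟨r, hr⟩ := ih q
      exact ⟨.cons (strongProd_adj_of_adj_of_adj hp hq) r, by simp [hr]⟩

theorem edist_fst_le_of_strongProd_adj {p q : α × β} (h : (strongProd G H).Adj p q) :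
    G.edist p.1 q.1 ≤ 1 :=
  edist_le_one_iff_adj_or_eq.mpr h.2.1.symm

theorem edist_snd_le_of_strongProd_adj {p q : α × β} (h : (strongProd G H).Adj p q) :
    H.edist p.2 q.2 ≤ 1 :=
  edist_le_one_iff_adj_or_eq.mpr h.2.2.symm

theorem max_edist_le_length_of_strongProd_walk {p q : α × β} (r : (strongProd G H).Walk p q) :
    max (G.edist p.1 q.1) (H.edist p.2 q.2) ≤ r.length := by
  induction r with
  | nil => simp
  | @cons p m q h r ih =>
    rw [max_le_iff] at ih ⊢
    rw [Walk.length_cons, Nat.cast_succ, add_comm]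
    exact ⟨G.edist_triangle.trans (add_le_add (edist_fst_le_of_strongProd_adj h) ih.1),
      H.edist_triangle.trans (add_le_add (edist_snd_le_of_strongProd_adj h) ih.2)⟩

theorem edist_strongProd (u x : α) (v y : β) :
    (strongProd G H).edist (u, v) (x, y) = max (G.edist u x) (H.edist v y) := by
  refine le_antisymm ?_ ?_
  · by_cases hux : G.Reachable u x
    · by_cases hvy : H.Reachable v y
      · obtain ⟨p, hp⟩ := hux.exists_walk_length_eq_edist
        obtain ⟨q, hq⟩ := hvy.exists_walk_length_eq_edist
        obtain ⟨r, hr⟩ := exists_strongProd_walk_length_eq_max p q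
        calc (strongProd G H).edist (u, v) (x, y) ≤ r.length := edist_le r
          _ = max (G.edist u x) (H.edist v y) := by rw [hr, Nat.mono_cast.map_max, hp, hq]
      · simp [edist_eq_top_of_not_reachable hvy]
    · simp [edist_eq_top_of_not_reachable hux]
  · by_cases h : (strongProd G H).Reachable (u, v) (x, y)
    · obtain ⟨r, hr⟩ := h.exists_walk_length_eq_edist
      exact hr ▸ max_edist_le_length_of_strongProd_walk r
    · simp [edist_eq_top_of_not_reachable h]

protected theorem Reachable.strongProd {u x : α} {v y : β} (hux : G.Reachable u x)
    (hvy : H.Reachable v y) : (_root_.strongProd G H).Reachable (u, v) (x, y) := by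
  obtain ⟨p⟩ := hux
  obtain ⟨q⟩ := hvy
  obtain ⟨r, -⟩ := exists_strongProd_walk_length_eq_max p q
  exact ⟨r⟩

theorem Reachable.dist_strongProd {u x : α} {v y : β} (hux : G.Reachable u x)
    (hvy : H.Reachable v y) :
    (strongProd G H).dist (u, v) (x, y) = max (G.dist u x) (H.dist v y) := by
  apply Nat.cast_injective (R := ℕ∞)
  rw [(hux.strongProd hvy).coe_dist_eq_edist, Nat.mono_cast.map_max, hux.coe_dist_eq_edist,
    hvy.coe_dist_eq_edist, edist_strongProd]

theorem dist_le_max_of_eq_or_adj {u w x : α} (huw : u = w ∨ G.Adj u w) {b : ℕ}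
    (h : b ≤ G.dist u x → MaximallyDistantFrom G u x) : G.dist x w ≤ max (G.dist u x) b := by
  obtain rfl | huw := huw
  · exact dist_comm.trans_le (le_max_left _ _)
  by_cases hb : b ≤ G.dist u x
  · exact (h hb w huw).trans (le_max_left _ _)
  · calc G.dist x w ≤ G.dist x u + G.dist u w := huw.reachable.dist_triangle_right x
      _ = G.dist u x + 1 := by rw [dist_comm, dist_eq_one_iff_adj.mpr huw]
      _ ≤ max (G.dist u x) b := by omega

theorem maximallyDistantFrom_strongProd_iff (hG : G.Preconnected) (hH : H.Preconnected)
    {u x : α} {v y : β} :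
    MaximallyDistantFrom (strongProd G H) (u, v) (x, y) ↔
      (H.dist v y ≤ G.dist u x → MaximallyDistantFrom G u x) ∧
      (G.dist u x ≤ H.dist v y → MaximallyDistantFrom H v y) := by
  have hdist (a c : α) (b d : β) :
      (strongProd G H).dist (a, b) (c, d) = max (G.dist a c) (H.dist b d) :=
    (hG a c).dist_strongProd (hH b d)
  constructor
  · intro h
    refine ⟨fun hba w hw => ?_, fun hab z hz => ?_⟩
    · have := h (w, v) (strongProd_adj_of_adj_left hw v)
      rw [hdist, hdist, max_eq_left hba] at this
      exact (le_max_left _ _).trans this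
    · have := h (u, z) (strongProd_adj_of_adj_right u hz)
      rw [hdist, hdist, max_eq_right hab] at this
      exact (le_max_right _ _).trans this
  · rintro ⟨hGmd, hHmd⟩ ⟨w, z⟩ ⟨-, huw, hvz⟩
    rw [hdist, hdist]
    exact max_le (dist_le_max_of_eq_or_adj huw hGmd)
      ((dist_le_max_of_eq_or_adj hvz hHmd).trans_eq (max_comm _ _))

theorem MaximallyDistantFrom.dist_pos [Nontrivial α] (hG : G.Preconnected) {u x : α}
    (h : MaximallyDistantFrom G u x) : 0 < G.dist u x := by
  obtain ⟨w, hw⟩ := hG.exists_adj_of_nontrivial u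
  refine Nat.pos_of_ne_zero fun hux => ?_
  obtain rfl := (hG u x).dist_eq_zero_iff.mp hux
  have := h w hw
  rw [dist_eq_one_iff_adj.mpr hw, dist_self] at this
  omega

theorem mutuallyMaximallyDistant_strongProd_iff_of_preconnected (hG : G.Preconnected)
    (hH : H.Preconnected) {u x : α} {v y : β} :
    MutuallyMaximallyDistant (strongProd G H) (u, v) (x, y) ↔
      (H.dist v y ≤ G.dist u x → MutuallyMaximallyDistant G u x) ∧
      (G.dist u x ≤ H.dist v y → MutuallyMaximallyDistant H v y) := by
  simp only [MutuallyMaximallyDistant, maximallyDistantFrom_strongProd_iff hG hH,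
    dist_comm (u := x), dist_comm (u := y), imp_and]
  tauto

end SimpleGraph

theorem mutuallyMaximallyDistant_strongProd_iff_general
    (G : SimpleGraph α) (H : SimpleGraph β)
    (hG : G.Connected) (hGn : Nontrivial α) (hH : H.Connected) (hHn : Nontrivial β)
    (u x : α) (v y : β) :
    MutuallyMaximallyDistant (strongProd G H) (u, v) (x, y) ↔
      (MutuallyMaximallyDistant G u x ∧ MutuallyMaximallyDistant H v y) ∨
      (MutuallyMaximallyDistant G u x ∧ v = y) ∨
      (MutuallyMaximallyDistant H v y ∧ u = x) ∨
      (MutuallyMaximallyDistant G u x ∧ H.dist v y < G.dist u x) ∨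
      (MutuallyMaximallyDistant H v y ∧ G.dist u x < H.dist v y) := by
  have hGpos : MutuallyMaximallyDistant G u x → 0 < G.dist u x :=
    fun h => h.1.dist_pos hG.preconnected
  have hHpos : MutuallyMaximallyDistant H v y → 0 < H.dist v y :=
    fun h => h.1.dist_pos hH.preconnected
  rw [mutuallyMaximallyDistant_strongProd_iff_of_preconnected hG.preconnected hH.preconnected,
    ← hG.dist_eq_zero_iff, ← hH.dist_eq_zero_iff]
  grind

theorem mutuallyMaximallyDistant_strongProd_iff [Fintype α] [Fintype β]
    (G : SimpleGraph α) (H : SimpleGraph β)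
    (hG : G.Connected) (hGn : Nontrivial α) (hH : H.Connected) (hHn : Nontrivial β)
    (u x : α) (v y : β) :
    MutuallyMaximallyDistant (strongProd G H) (u, v) (x, y) ↔
      (MutuallyMaximallyDistant G u x ∧ MutuallyMaximallyDistant H v y) ∨
      (MutuallyMaximallyDistant G u x ∧ v = y) ∨
      (MutuallyMaximallyDistant H v y ∧ u = x) ∨
      (MutuallyMaximallyDistant G u x ∧ H.dist v y < G.dist u x) ∨
      (MutuallyMaximallyDistant H v y ∧ G.dist u x < H.dist v y) :=
  mutuallyMaximallyDistant_strongProd_iff_general G H hG hGn hH hHn u x v y
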